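/- Let F be a finite field of order q ≥ n + 2, f : {0,1}^n → F_2 ⊆ F arbitrary with multilinear extension g, and x ∈ {0,1}^n. For any nonzero y ∈ F^n, given the complete list of values (g(x + j·y))_{j ∈ F \ {0}}, the value f(x) is uniquely determined and computable via polynomial interpolation. -/

import Mathlib

/-!
Put `h = g - g'`. Multilinearity bounds the total degree of `h` by `n`, so the restriction
`p(t) = h(x + t • y)` of `h` to the line through `x` in direction `y` is a univariate polynomial of
degree at most `n`. It vanishes at the `q - 1 ≥ n + 1` nonzero points of `F`, hence identically,
and in particular `g(x) = g'(x)`; as `g` and `g'` extend `f` and `f'`, this gives `f x = f' x`.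
-/

open Polynomial

namespace MvPolynomial

variable {σ R : Type*}

theorem totalDegree_le_card_mul_of_degreeOf_le [CommSemiring R] [Fintype σ]
    {p : MvPolynomial σ R} {d : ℕ} (h : ∀ i, p.degreeOf i ≤ d) :
    p.totalDegree ≤ Fintype.card σ * d := by
  classical
  refine Finset.sup_le fun m hm => ?_
  calc m.sum (fun _ e => e) = ∑ i ∈ m.support, m i := rfl
    _ ≤ ∑ i, m i := Finset.sum_le_sum_of_subset (Finset.subset_univ _)
    _ ≤ ∑ _i : σ, d := Finset.sum_le_sum fun i _ => (monomial_le_degreeOf i hm).trans (h i)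
    _ = Fintype.card σ * d := by simp

section restrictLine

variable [CommSemiring R]

noncomputable def restrictLine (p : MvPolynomial σ R) (a b : σ → R) : R[X] :=
  aeval (fun i => Polynomial.C (a i) + Polynomial.C (b i) * Polynomial.X) p

theorem eval_restrictLine (p : MvPolynomial σ R) (a b : σ → R) (t : R) :
    (p.restrictLine a b).eval t = eval (fun i => a i + t * b i) p := by
  rw [restrictLine, aeval_def, polynomial_eval_eval₂]
  simp only [Polynomial.eval_add, Polynomial.eval_mul, Polynomial.eval_C, Polynomial.eval_X,
    mul_comm _ t]
  congr 1
  ext r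
  simp

theorem natDegree_restrictLine_le (p : MvPolynomial σ R) (a b : σ → R) :
    (p.restrictLine a b).natDegree ≤ p.totalDegree := by
  refine (aeval_natDegree_le (n := 1) p le_rfl _ fun i => ?_).trans_eq (mul_one _)
  exact (natDegree_add_le _ _).trans (max_le ((natDegree_C _).trans_le zero_le_one)
    ((natDegree_C_mul_le _ _).trans natDegree_X_le))

end restrictLine

theorem eval_eq_zero_of_eval_punctured_line_eq_zero {F : Type*} [Field F] [Fintype F]
    {p : MvPolynomial σ F} (hdeg : p.totalDegree + 2 ≤ Fintype.card F) (a b : σ → F)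
    (h : ∀ t : F, t ≠ 0 → eval (fun i => a i + t * b i) p = 0) :
    eval a p = 0 := by
  classical
  have hline : p.restrictLine a b = 0 := by
    refine eq_zero_of_natDegree_lt_card_of_eval_eq_zero' _ (Finset.univ.erase 0)
      (fun t ht => ?_) ?_
    · rw [eval_restrictLine]
      exact h t (Finset.ne_of_mem_erase ht)
    · rw [Finset.card_erase_of_mem (Finset.mem_univ _), Finset.card_univ]
      have := natDegree_restrictLine_le p a b
      omega
  simpa [hline] using (eval_restrictLine p a b 0).symm

end MvPolynomial

theorem Fin.natCast_val_injective_two {R : Type*} [AddMonoidWithOne R] [NeZero (1 : R)] :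
    Function.Injective fun k : Fin 2 => ((k : ℕ) : R) := by
  intro a b hab
  fin_cases a <;> fin_cases b <;> simp_all

theorem stmt_19_general (F : Type*) [Field F] [Fintype F] (n : ℕ)
    (hcard : n + 2 ≤ Fintype.card F)
    (f f' : (Fin n → Fin 2) → Fin 2) (g g' : MvPolynomial (Fin n) F)
    (hml : ∀ i : Fin n, g.degreeOf i ≤ 1) (hml' : ∀ i : Fin n, g'.degreeOf i ≤ 1)
    (hext : ∀ w : Fin n → Fin 2,
      MvPolynomial.eval (fun i => ((w i : ℕ) : F)) g = ((f w : ℕ) : F))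
    (hext' : ∀ w : Fin n → Fin 2,
      MvPolynomial.eval (fun i => ((w i : ℕ) : F)) g' = ((f' w : ℕ) : F))
    (x : Fin n → Fin 2) (y : Fin n → F)
    (hvals : ∀ j : F, j ≠ 0 →
      MvPolynomial.eval (fun i => ((x i : ℕ) : F) + j * y i) g
        = MvPolynomial.eval (fun i => ((x i : ℕ) : F) + j * y i) g') :
    f x = f' x := by
  have hdeg : (g - g').totalDegree ≤ n := by
    have hg := MvPolynomial.totalDegree_le_card_mul_of_degreeOf_le hml
    have hg' := MvPolynomial.totalDegree_le_card_mul_of_degreeOf_le hml'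
    simp only [Fintype.card_fin, mul_one] at hg hg'
    exact (MvPolynomial.totalDegree_sub g g').trans (max_le hg hg')
  have hx := MvPolynomial.eval_eq_zero_of_eval_punctured_line_eq_zero (p := g - g')
    (by omega) (fun i => ((x i : ℕ) : F)) y fun j hj => by rw [map_sub, hvals j hj, sub_self]
  rw [map_sub, sub_eq_zero, hext, hext'] at hx
  exact Fin.natCast_val_injective_two hx

/-- For a finite field `F` of order `q ≥ n + 2`, `f : {0,1}^n → F_2 ⊆ F` with multilinear
extension `g`, `x ∈ {0,1}^n`, and nonzero `y ∈ F^n`: the list of values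
`(g(x + j·y))_{j ∈ F \ {0}}` uniquely determines `f(x)`. -/
theorem stmt_19 (F : Type*) [Field F] [Fintype F] (n : ℕ)
    (hcard : n + 2 ≤ Fintype.card F)
    (f f' : (Fin n → Fin 2) → Fin 2) (g g' : MvPolynomial (Fin n) F)
    (hml : ∀ i : Fin n, g.degreeOf i ≤ 1) (hml' : ∀ i : Fin n, g'.degreeOf i ≤ 1)
    (hext : ∀ w : Fin n → Fin 2,
      MvPolynomial.eval (fun i => ((w i : ℕ) : F)) g = ((f w : ℕ) : F))
    (hext' : ∀ w : Fin n → Fin 2,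
      MvPolynomial.eval (fun i => ((w i : ℕ) : F)) g' = ((f' w : ℕ) : F))
    (x : Fin n → Fin 2) (y : Fin n → F) (hy : y ≠ 0)
    (hvals : ∀ j : F, j ≠ 0 →
      MvPolynomial.eval (fun i => ((x i : ℕ) : F) + j * y i) g
        = MvPolynomial.eval (fun i => ((x i : ℕ) : F) + j * y i) g') :
    f x = f' x :=
  stmt_19_general F n hcard f f' g g' hml hml' hext hext' x y hvals
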